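/- arXiv:2604.10779 — 4 statements merged into one kernel-verified Lean document; each statement's English description precedes it below -/
import Mathlib

section
/- For every n ≥ 1 and every permutation π ∈ S_n, met(π) = max over i ∈ {1,...,n} of met(π^i), where π^i denotes the subsequence of the first i entries of π consisting of those entries greater than or equal to π_i (i.e. π^i = π[:i+1]_{≥π_i}). -/
noncomputable section
theorem foldrMaxMem (x : ℕ) (xs : List ℕ) : (x :: xs).foldr max 0 ∈ x :: xs := by
  induction xs generalizing x with
  | nil => simp
  | cons y ys ih =>
    rcases max_choice x ((y :: ys).foldr max 0) with h | h
    · simp only [List.foldr_cons] at h ⊢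
      rw [h]; exact List.mem_cons_self
    · simp only [List.foldr_cons] at h ⊢
      rw [h]; exact List.mem_cons_of_mem _ (ih y)
theorem takeWhileLt (l : List ℕ) (m : ℕ) (hm : m ∈ l) :
    (l.takeWhile (fun y => y ≠ m)).length < l.length := by
  have hd : l.dropWhile (fun y => y ≠ m) ≠ [] := by
    intro h; rw [List.dropWhile_eq_nil_iff] at h; simpa using h m hm
  have h1 : (l.takeWhile (fun y => y ≠ m)).length
      + (l.dropWhile (fun y => y ≠ m)).length = l.length := by
    rw [← List.length_append, List.takeWhile_append_dropWhile]
  have h2 : 0 < (l.dropWhile (fun y => y ≠ m)).length := List.length_pos_iff.mpr hd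
  omega
theorem dropWhileDropLt (l : List ℕ) (m : ℕ) (hl : l ≠ []) :
    ((l.dropWhile (fun y => y ≠ m)).drop 1).length < l.length := by
  have h1 : (l.takeWhile (fun y => y ≠ m)).length
      + (l.dropWhile (fun y => y ≠ m)).length = l.length := by
    rw [← List.length_append, List.takeWhile_append_dropWhile]
  have h2 : 0 < l.length := List.length_pos_iff.mpr hl
  rw [List.length_drop]; omega

/-- West's stack-sorting map `s`: `s([]) = []`, `s(L m R) = s(L) s(R) m` for `m` the maximum. -/
def ss : List ℕ → List ℕ
  | [] => []
  | x :: xs =>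
    ss ((x :: xs).takeWhile (fun y => y ≠ (x :: xs).foldr max 0)) ++
    ss (((x :: xs).dropWhile (fun y => y ≠ (x :: xs).foldr max 0)).drop 1) ++
    [(x :: xs).foldr max 0]
termination_by l => l.length
decreasing_by
  · exact takeWhileLt _ _ (foldrMaxMem _ _)
  · exact dropWhileDropLt _ _ (by simp)

/-- `met π` : the least `k ≥ 0` with `s^k(π)` increasing. -/
def met (l : List ℕ) : ℕ := sInf {k | List.Pairwise (· < ·) (ss^[k] l)}

/-- Right-to-left maxima of a list, read from left to right.  For the prefix of `s^{i-1}(π)`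
before `0` this is exactly the column sequence `C_{π,i}`. -/
def rtlMax : List ℕ → List ℕ
  | [] => []
  | x :: xs => if ∀ y ∈ xs, y < x then x :: rtlMax xs else rtlMax xs

/-- The blocks `b_{π,i,j}`: the segments strictly between consecutive right-to-left maxima. -/
def blocksOf : List ℕ → List (List ℕ)
  | [] => []
  | x :: xs =>
    if ∀ y ∈ xs, y < x then [] :: blocksOf xs
    else
      match blocksOf xs with
      | [] => [[x]]
      | b :: bs => (x :: b) :: bs

/-- The part of `s^{i-1}(π)` strictly before the entry `0`. -/
def prefixAt (π : List ℕ) (i : ℕ) : List ℕ := (ss^[i-1] π).takeWhile (fun x => x ≠ 0)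

/-- The column sequence `C_{π,i}`. -/
def colSeqAt (π : List ℕ) (i : ℕ) : List ℕ := rtlMax (prefixAt π i)

/-- The block sequence `B_{π,i}`. -/
def blocksAt (π : List ℕ) (i : ℕ) : List (List ℕ) := blocksOf (prefixAt π i)

/-- `col_π(v)`: the unique `i` with `v ∈ C_{π,i}` (as the least such `i ≥ 1`). -/
def colOf (π : List ℕ) (v : ℕ) : ℕ := sInf {i | 1 ≤ i ∧ v ∈ colSeqAt π i}

/-- `colpos_π(v)`: the (1-indexed) position of `v` in `C_{π,col_π(v)}`. -/
def colposOf (π : List ℕ) (v : ℕ) : ℕ := (colSeqAt π (colOf π v)).idxOf v + 1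

/-- `leftof_π(v) = c_{π,col_π(v)-1,j}` for the unique `j` with `v = max(b_{π,col_π(v)-1,j})`. -/
def leftOf (π : List ℕ) (v : ℕ) : ℕ :=
  (colSeqAt π (colOf π v - 1)).getD
    (((blocksAt π (colOf π v - 1)).map (fun b => b.foldr max 0)).idxOf v) 0

/-- `row_π(v)`: follow `leftof` back to column 1 and take `colpos` there. -/
def rowOf (π : List ℕ) (v : ℕ) : ℕ := colposOf π ((leftOf π)^[colOf π v - 1] v)

/-- `upof_π(v) = c_{π,col_π(v),colpos_π(v)-1}`. -/
def upOf (π : List ℕ) (v : ℕ) : ℕ := (colSeqAt π (colOf π v)).getD (colposOf π v - 2) 0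

/-- The stack-sorting tableau `T_π(v) = (col_π(v), row_π(v))`. -/
def Tmap (π : List ℕ) (v : ℕ) : ℕ × ℕ := (colOf π v, rowOf π v)

/-- The composition `α_π = (|{v ∈ [n] : row_π(v) = j}|)_{j=1}^{|C_{π,1}|}` (here `n = |π| - 1`). -/
def alphaOf (π : List ℕ) : List ℕ :=
  (List.range' 1 (colSeqAt π 1).length).map
    (fun j => ((Finset.Icc 1 (π.length - 1)).filter (fun v => rowOf π v = j)).card)

/-- Membership in the composition diagram `D(α) = {(i,j) : 1 ≤ j ≤ ℓ(α), 1 ≤ i ≤ α_j}`. -/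
def inDiagram (α : List ℕ) (p : ℕ × ℕ) : Prop :=
  1 ≤ p.1 ∧ 1 ≤ p.2 ∧ p.2 ≤ α.length ∧ p.1 ≤ α.getD (p.2 - 1) 0

instance inDiagramDec (α : List ℕ) : DecidablePred (inDiagram α) := fun p => by
  unfold inDiagram; infer_instance

/-- `D(α)` as a finite set. -/
def diagramFinset (α : List ℕ) : Finset (ℕ × ℕ) :=
  (Finset.range (α.foldr max 0 + 1) ×ˢ Finset.range (α.length + 1)).filter
    (fun p => inDiagram α p)

/-- `colpos_α(i,j) = |{(i,j') ∈ D(α) : j' < j} ∪ {(i,0)}|`. -/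
def colposA (α : List ℕ) (p : ℕ × ℕ) : ℕ :=
  (((Finset.range p.2).filter (fun j' => inDiagram α (p.1, j'))) ∪ {0}).card

/-- `leftof_α(i,j) = (i-1,j)`. -/
def leftA (p : ℕ × ℕ) : ℕ × ℕ := (p.1 - 1, p.2)

/-- `upof_α(i,j) = (i, max({j' < j : (i,j') ∈ D(α)} ∪ {0}))`. -/
def upA (α : List ℕ) (p : ℕ × ℕ) : ℕ × ℕ :=
  (p.1, (((Finset.range p.2).filter (fun j' => inDiagram α (p.1, j'))) ∪ {0}).sup id)

/-- The hook length `h_α(i,j)`. -/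
def hook (α : List ℕ) (p : ℕ × ℕ) : ℕ :=
  if 1 < p.1 then
    ((diagramFinset α).filter (fun q =>
      q.1 ≤ p.1 - 1 ∧ (upA α (p.1 - 1, p.2)).2 < q.2 ∧ q.2 ≤ p.2)).card
  else 1

/-- The segment `B_{π,T}(i,j,k)` of `s^{k-1}(π)`, where `U = T⁻¹`. -/
def Bseg (π : List ℕ) (α : List ℕ) (U : ℕ × ℕ → ℕ) (i j k : ℕ) : List ℕ :=
  if (upA α (leftA (i, j))).2 > 0 then
    ((ss^[k-1] π).take ((ss^[k-1] π).idxOf (U (k, j)) + 1)).drop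
      ((ss^[k-1] π).idxOf (U (k, (upA α (leftA (i, j))).2)) + 1)
  else
    (ss^[k-1] π).take ((ss^[k-1] π).idxOf (U (k, j)) + 1)

/-- The inverse `T_π⁻¹` of the stack-sorting tableau. -/
def invTmap (π : List ℕ) : ℕ × ℕ → ℕ :=
  Function.invFunOn (Tmap π) (Set.Icc 1 (π.length - 1))

/-- A linear extension of `D(α)`, encoded as the list `[T(1), …, T(n)]`:
`T` is a bijection `{1,…,n} → D(α)` with `T(a) ≥_D T(b) → a ≥ b`. -/
def isLinExt (α : List ℕ) (ℓ : List (ℕ × ℕ)) : Prop :=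
  ℓ.Nodup ∧ (∀ p, p ∈ ℓ ↔ inDiagram α p) ∧
  ∀ a b, a < ℓ.length → b < ℓ.length →
    (ℓ.getD a (0, 0)).1 ≤ (ℓ.getD b (0, 0)).1 ∧ (ℓ.getD a (0, 0)).2 ≤ (ℓ.getD b (0, 0)).2 →
    b ≤ a
end

/-! Stack-sorting never creates an inversion: at each level of the recursion
`s(L m R) = s(L) s(R) m` the only pairs whose order changes are `(m, r)` with `r ∈ R`, and they
become ascents. So `s` preserves each relation containing `≤`; in particular an inversion `a > b`
of `s^k(π)` is already one of `π`, and `s` commutes with restricting to a subsequence whenever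
every dropped entry is smaller than each later kept one. Both passing to the prefix `π[:i+1]` and
keeping the entries `≥ π_i` are such restrictions, so `s^k(π^i)` is a subsequence of `s^k(π)` and
`met(π^i) ≤ met(π)`. Conversely, if `a` precedes `b < a` in `s^{met(π)-1}(π)`, then `a` precedes
`b` in `π`, and for `π_i = b` both survive in `π^i`, which is therefore not sorted after
`met(π) - 1` passes either. -/

namespace StackSort

open List

theorem foldr_max_append_cons {A B : List ℕ} {M : ℕ} (hA : ∀ a ∈ A, a < M)
    (hB : ∀ b ∈ B, b ≤ M) : (A ++ M :: B).foldr max 0 = M := by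
  refine le_antisymm (List.max_le_of_forall_le _ M fun x hx => ?_)
    (List.le_max_of_le (l := A ++ M :: B) (by simp) le_rfl)
  rcases mem_append.1 hx with hx | hx
  · exact (hA x hx).le
  · rcases mem_cons.1 hx with rfl | hx
    exacts [le_rfl, hB x hx]

theorem ss_append_cons {A B : List ℕ} {M : ℕ} (hA : ∀ a ∈ A, a < M) (hB : ∀ b ∈ B, b ≤ M) :
    ss (A ++ M :: B) = ss A ++ ss B ++ [M] := by
  have hA' : ∀ a ∈ A, decide (a ≠ M) = true := fun a ha => by simpa using (hA a ha).ne
  obtain ⟨x, xs, hxs⟩ : ∃ x xs, A ++ M :: B = x :: xs := by cases A <;> simp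
  rw [hxs, ss, ← hxs, foldr_max_append_cons hA hB, takeWhile_append_of_pos hA',
    dropWhile_append_of_pos hA']
  simp

theorem exists_eq_append_cons {l : List ℕ} (hl : l ≠ []) :
    ∃ A M B, l = A ++ M :: B ∧ (∀ a ∈ A, a < M) ∧ ∀ b ∈ B, b ≤ M := by
  have hmem : l.foldr max 0 ∈ l := by
    obtain ⟨x, xs, rfl⟩ := exists_cons_of_ne_nil hl
    exact foldrMaxMem x xs
  have hle : ∀ y ∈ l, y ≤ l.foldr max 0 := fun y hy => List.le_max_of_le hy le_rfl
  generalize l.foldr max 0 = M at hmem hle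
  obtain ⟨A, B, hMA, rfl, -⟩ := exists_erase_eq hmem
  refine ⟨A, M, B, rfl, fun a ha => ?_, fun b hb => hle b (by simp [hb])⟩
  exact (hle a (by simp [ha])).lt_of_ne (by rintro rfl; exact hMA ha)

theorem ss_induction {P : List ℕ → Prop} (nil : P [])
    (append_cons : ∀ A M B, (∀ a ∈ A, a < M) → (∀ b ∈ B, b ≤ M) → P A → P B → P (A ++ M :: B))
    (l : List ℕ) : P l := by
  induction hn : l.length using Nat.strong_induction_on generalizing l with
  | _ n ih =>
  rcases eq_or_ne l [] with rfl | hl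
  · exact nil
  obtain ⟨A, M, B, rfl, hA, hB⟩ := exists_eq_append_cons hl
  simp only [length_append, length_cons] at hn
  exact append_cons A M B hA hB (ih _ (by omega) A rfl) (ih _ (by omega) B rfl)

theorem ss_perm (l : List ℕ) : ss l ~ l := by
  induction l using ss_induction with
  | nil => simp [ss]
  | append_cons A M B hA hB ihA ihB =>
    rw [ss_append_cons hA hB]
    calc ss A ++ ss B ++ [M] ~ A ++ B ++ [M] := (ihA.append ihB).append_right _
      _ ~ A ++ M :: B := (perm_append_singleton M _).trans perm_middle.symm

theorem iterate_ss_perm (k : ℕ) (l : List ℕ) : ss^[k] l ~ l := by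
  induction k with
  | zero => rfl
  | succ k ih => rw [Function.iterate_succ_apply']; exact (ss_perm _).trans ih

theorem pairwise_ss {R : ℕ → ℕ → Prop} (hR : ∀ x y, x ≤ y → R x y) {l : List ℕ}
    (h : l.Pairwise R) : (ss l).Pairwise R := by
  induction l using ss_induction with
  | nil => simp [ss]
  | append_cons A M B hA hB ihA ihB =>
    rw [pairwise_append, pairwise_cons] at h
    obtain ⟨hA', ⟨-, hB'⟩, hAMB⟩ := h
    rw [ss_append_cons hA hB, pairwise_append, pairwise_append]
    refine ⟨⟨ihA hA', ihB hB', fun a ha b hb => hAMB a ((ss_perm A).mem_iff.1 ha) b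
      (mem_cons_of_mem _ ((ss_perm B).mem_iff.1 hb))⟩, pairwise_singleton _ _, ?_⟩
    intro x hx y hy
    obtain rfl := mem_singleton.1 hy
    rcases mem_append.1 hx with hx | hx
    · exact hAMB x ((ss_perm A).mem_iff.1 hx) _ mem_cons_self
    · exact hR _ _ (hB x ((ss_perm B).mem_iff.1 hx))

theorem pairwise_iterate_ss {R : ℕ → ℕ → Prop} (hR : ∀ x y, x ≤ y → R x y) {l : List ℕ}
    (h : l.Pairwise R) (k : ℕ) : (ss^[k] l).Pairwise R := by
  induction k with
  | zero => exact h
  | succ k ih => rw [Function.iterate_succ_apply']; exact pairwise_ss hR ih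

theorem sublist_of_sublist_iterate_ss {a b k : ℕ} {l : List ℕ} (hba : b < a)
    (h : [a, b] <+ ss^[k] l) : [a, b] <+ l := by
  by_contra hl
  have hR : l.Pairwise (fun x y => ¬(x = a ∧ y = b)) :=
    pairwise_of_forall_sublist fun hxy ⟨hx, hy⟩ => hl (hx ▸ hy ▸ hxy)
  exact pairwise_iff_forall_sublist.1 (pairwise_iterate_ss (fun x y hxy ⟨hx, hy⟩ => by omega) hR k)
    h ⟨rfl, rfl⟩

theorem ss_eq_self_of_pairwise {l : List ℕ} (h : l.Pairwise (· < ·)) : ss l = l := by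
  induction l using ss_induction with
  | nil => simp [ss]
  | append_cons A M B hA hB ihA ihB =>
    rw [pairwise_append, pairwise_cons] at h
    obtain ⟨hA', ⟨hMB, -⟩, -⟩ := h
    obtain rfl : B = [] := eq_nil_iff_forall_not_mem.2 fun b hb => (hMB b hb).not_ge (hB b hb)
    rw [ss_append_cons hA hB, ihA hA']
    simp [ss]

theorem iterate_ss_append_singleton {C : List ℕ} {M : ℕ} (hC : ∀ c ∈ C, c < M) (k : ℕ) :
    ss^[k] (C ++ [M]) = ss^[k] C ++ [M] := by
  induction k with
  | zero => rfl
  | succ k ih =>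
    rw [Function.iterate_succ_apply', Function.iterate_succ_apply', ih,
      ss_append_cons (fun c hc => hC c ((iterate_ss_perm k C).mem_iff.1 hc)) (by simp)]
    simp [ss]

theorem exists_pairwise_iterate_ss {l : List ℕ} (hl : l.Nodup) :
    ∃ k, (ss^[k] l).Pairwise (· < ·) := by
  induction hn : l.length using Nat.strong_induction_on generalizing l with
  | _ n ih =>
  rcases eq_or_ne l [] with rfl | hne
  · exact ⟨0, Pairwise.nil⟩
  obtain ⟨A, M, B, rfl, hA, hB⟩ := exists_eq_append_cons hne
  obtain ⟨hM, hAB⟩ := nodup_cons.1 (nodup_middle.1 hl)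
  have hC : ss A ++ ss B ~ A ++ B := (ss_perm A).append (ss_perm B)
  have hCM : ∀ c ∈ ss A ++ ss B, c < M := fun c hc => by
    rcases mem_append.1 (hC.mem_iff.1 hc) with hc' | hc'
    · exact hA c hc'
    · exact (hB c hc').lt_of_ne (by rintro rfl; exact hM (mem_append_right _ hc'))
  obtain ⟨k, hk⟩ := ih _ (by simp [← hn, hC.length_eq]) (hC.nodup_iff.2 hAB) rfl
  refine ⟨k + 1, ?_⟩
  rw [Function.iterate_succ_apply, ss_append_cons hA hB, iterate_ss_append_singleton hCM,
    pairwise_append]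
  exact ⟨hk, pairwise_singleton _ _, fun c hc _ hM' =>
    (mem_singleton.1 hM') ▸ hCM c ((iterate_ss_perm k _).mem_iff.1 hc)⟩

theorem ss_filter {p : ℕ → Bool} {l : List ℕ}
    (h : l.Pairwise (fun d s => p s → p d = false → d < s)) :
    ss (l.filter p) = (ss l).filter p := by
  induction l using ss_induction with
  | nil => simp [ss]
  | append_cons A M B hA hB ihA ihB =>
    rw [pairwise_append, pairwise_cons] at h
    obtain ⟨hA', ⟨hMB, hB'⟩, -⟩ := h
    rw [ss_append_cons hA hB, filter_append, filter_append, filter_append, filter_cons]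
    by_cases hM : p M
    · rw [if_pos hM, ss_append_cons (fun a ha => hA a (mem_of_mem_filter ha))
        (fun b hb => hB b (mem_of_mem_filter hb)), ihA hA', ihB hB']
      simp [hM]
    · have hBp : B.filter p = [] :=
        filter_eq_nil_iff.2 fun b hb hpb => (hMB b hb hpb (by simpa using hM)).not_ge (hB b hb)
      have hssBp : (ss B).filter p = [] := by
        have := (ss_perm B).filter p
        rwa [hBp, perm_nil] at this
      simp [hM, hBp, hssBp, ihA hA']

theorem iterate_ss_filter {p : ℕ → Bool} {l : List ℕ}
    (h : l.Pairwise (fun d s => p s → p d = false → d < s)) (k : ℕ) :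
    ss^[k] (l.filter p) = (ss^[k] l).filter p := by
  have hR : ∀ x y, x ≤ y → p y → p x = false → x < y := fun x y hxy hy hx =>
    hxy.lt_of_ne (by rintro rfl; simp [hx] at hy)
  induction k with
  | zero => rfl
  | succ k ih =>
    rw [Function.iterate_succ_apply', Function.iterate_succ_apply', ih,
      ss_filter (pairwise_iterate_ss hR h k)]

theorem iterate_ss_filter_le (b : ℕ) (l : List ℕ) (k : ℕ) :
    ss^[k] (l.filter (b ≤ ·)) = (ss^[k] l).filter (b ≤ ·) :=
  iterate_ss_filter (pairwise_of_forall fun d s hs hd => by simp at hs hd; omega) k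

theorem iterate_ss_prefix {P Q : List ℕ} (hPQ : (P ++ Q).Nodup) (k : ℕ) :
    ss^[k] P = (ss^[k] (P ++ Q)).filter (· ∈ P) := by
  have hdisj : ∀ x ∈ Q, x ∉ P := fun x hxQ hxP => (nodup_append.1 hPQ).2.2 x hxP x hxQ rfl
  have hP : (P ++ Q).filter (· ∈ P) = P := by
    rw [filter_append, filter_eq_self.2 (by simp), filter_eq_nil_iff.2 (by simpa using hdisj),
      append_nil]
  conv_lhs => rw [← hP]
  refine iterate_ss_filter (pairwise_append.2 ⟨?_, ?_, ?_⟩) k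
  · exact pairwise_of_forall_mem_list fun d hd _ _ _ hd' => by simp [hd] at hd'
  · exact pairwise_of_forall_mem_list fun _ _ s hs hs' => by simp [hdisj s hs] at hs'
  · exact fun d hd _ _ _ hd' => by simp [hd] at hd'

theorem iterate_ss_take_filter_le {l : List ℕ} (hl : l.Nodup) (i b k : ℕ) :
    ss^[k] ((l.take i).filter (b ≤ ·)) = ((ss^[k] l).filter (· ∈ l.take i)).filter (b ≤ ·) := by
  rw [iterate_ss_filter_le, iterate_ss_prefix (Q := l.drop i) (by rwa [take_append_drop]),
    take_append_drop]

theorem met_le_iff {l : List ℕ} (hl : l.Nodup) {k : ℕ} :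
    met l ≤ k ↔ (ss^[k] l).Pairwise (· < ·) := by
  refine ⟨fun h => ?_, fun h => Nat.sInf_le h⟩
  have hmet : (ss^[met l] l).Pairwise (· < ·) := Nat.sInf_mem (exists_pairwise_iterate_ss hl)
  rwa [← Nat.sub_add_cancel h, Function.iterate_add_apply,
    Function.iterate_fixed (ss_eq_self_of_pairwise hmet)]

theorem exists_eq_append_cons_of_pair_sublist {a b : ℕ} {l : List ℕ} (h : [a, b] <+ l) :
    ∃ P Q, l = P ++ b :: Q ∧ a ∈ P := by
  obtain ⟨r₁, r₂, rfl, ha, hb⟩ := cons_sublist_iff.1 h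
  obtain ⟨Y, Q, rfl⟩ := append_of_mem (singleton_sublist.1 hb)
  exact ⟨r₁ ++ Y, Q, by simp, mem_append_left _ ha⟩

theorem met_take_filter_le {l : List ℕ} (hl : l.Nodup) (i b : ℕ) :
    met ((l.take i).filter (b ≤ ·)) ≤ met l := by
  rw [met_le_iff ((hl.sublist (take_sublist i l)).filter _), iterate_ss_take_filter_le hl]
  exact (((met_le_iff hl).1 le_rfl).filter _).filter _

theorem exists_le_met_take_filter {l : List ℕ} (hl : l.Nodup) (hpos : 0 < met l) :
    ∃ i ∈ Finset.Icc 1 l.length,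
      met l ≤ met ((l.take i).filter (fun x => l.getD (i - 1) 0 ≤ x)) := by
  obtain ⟨k, hk⟩ : ∃ k, met l = k + 1 := ⟨met l - 1, by omega⟩
  obtain ⟨a, b, hab, hba⟩ : ∃ a b, [a, b] <+ ss^[k] l ∧ b < a := by
    have hns : ¬ (ss^[k] l).Pairwise (· < ·) := by rw [← met_le_iff hl]; omega
    simp only [pairwise_iff_forall_sublist, not_forall, not_lt] at hns
    obtain ⟨a, b, hab, hba⟩ := hns
    refine ⟨a, b, hab, hba.lt_of_ne ?_⟩
    rintro rfl
    exact nodup_iff_sublist.1 ((iterate_ss_perm k l).nodup_iff.2 hl) b hab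
  obtain ⟨P, Q, rfl, haP⟩ :=
    exists_eq_append_cons_of_pair_sublist (sublist_of_sublist_iterate_ss hba hab)
  refine ⟨P.length + 1, by simp, ?_⟩
  have htake : (P ++ b :: Q).take (P.length + 1) = P ++ [b] := by
    rw [take_length_add_append]; rfl
  have hget : (P ++ b :: Q).getD (P.length + 1 - 1) 0 = b := by simp
  rw [hget, hk, Nat.succ_le_iff, ← not_le,
    met_le_iff ((hl.sublist (take_sublist _ _)).filter _), iterate_ss_take_filter_le hl, htake]
  intro hs
  have hkept : ([a, b].filter (· ∈ P ++ [b])).filter (b ≤ ·) = [a, b] := by simp [haP, hba.le]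
  exact lt_asymm hba (pairwise_iff_forall_sublist.1 hs (hkept ▸ (hab.filter _).filter _))

end StackSort

theorem stmt_0_general (n : ℕ) (π : List ℕ) (hπ : π.Perm (List.range' 1 n)) :
    met π = (Finset.Icc 1 n).sup
      (fun i => met ((π.take i).filter (fun x => π.getD (i - 1) 0 ≤ x))) := by
  have hl : π.Nodup := hπ.nodup_iff.2 List.nodup_range'
  obtain rfl : π.length = n := by simpa using hπ.length_eq
  refine le_antisymm ?_ (Finset.sup_le fun i _ => StackSort.met_take_filter_le hl i _)
  rcases Nat.eq_zero_or_pos (met π) with h | h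
  · simp [h]
  obtain ⟨i, hi, hle⟩ := StackSort.exists_le_met_take_filter hl h
  exact Finset.le_sup_of_le hi hle

/-- Theorem 1.4 / 2.1: for all `π ∈ Sₙ`, `met(π) = max_{i ∈ [n]} met(π[:i+1]_{≥ π_i})`. -/
theorem stmt_0 (n : ℕ) (hn : 1 ≤ n) (π : List ℕ) (hπ : π.Perm (List.range' 1 n)) :
    met π = (Finset.Icc 1 n).sup
      (fun i => met ((π.take i).filter (fun x => π.getD (i - 1) 0 ≤ x))) :=
  stmt_0_general n π hπ
end

section
/- For every n ≥ 1 and every permutation π ∈ S_n, met(π) = max(met(π[:n]), met(π_{≥π_n})), where π[:n] is the sequence of the first n−1 entries of π and π_{≥π_n} is the subsequence of entries of π greater than or equal to its last entry π_n. -/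
/-!
Write `π = σ a`. Stack-sorting commutes with restricting to the entries `≥ a` (an up-set), and,
as long as every entry smaller than `a` lies to its left, also with deleting `a`; this property
of `a` is itself preserved by `s`, because `s` never inverts a pair `x < y` with `x` to the left
of `y`. So `s^k(π)` restricts to `s^k(σ)` and `s^k(π_{≥a})`, and with all smaller entries left of
`a`, `s^k(π)` is increasing exactly when both restrictions are.
-/

namespace List

variable {α : Type*}

theorem pair_sublist_append_iff {x y : α} {A B : List α} :
    [x, y] <+ A ++ B ↔ [x, y] <+ A ∨ (x ∈ A ∧ y ∈ B) ∨ [x, y] <+ B := by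
  rw [sublist_append_iff]
  constructor
  · rintro ⟨_ | ⟨a, _ | ⟨b, _ | _⟩⟩, l₂, h, h₁, h₂⟩ <;> grind
  · rintro (h | ⟨hx, hy⟩ | h)
    · exact ⟨[x, y], [], by simp, h, nil_sublist _⟩
    · exact ⟨[x], [y], rfl, singleton_sublist.2 hx, singleton_sublist.2 hy⟩
    · exact ⟨[], [x, y], rfl, nil_sublist _, h⟩

theorem Nodup.not_pair_sublist_swap {x y : α} {l : List α} (hl : l.Nodup) (h : [x, y] <+ l) :
    ¬ [y, x] <+ l := by
  induction l with
  | nil => simp at h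
  | cons z t ih =>
    rw [nodup_cons] at hl
    rw [sublist_cons_iff] at h ⊢
    rintro (h' | ⟨r, hr, h'⟩) <;> grind

theorem exists_eq_append_cons_first_max [LinearOrder α] {l : List α} (hl : l ≠ []) :
    ∃ L m R, l = L ++ m :: R ∧ (∀ x ∈ L, x < m) ∧ ∀ x ∈ R, x ≤ m := by
  induction l with
  | nil => exact absurd rfl hl
  | cons x t ih =>
    rcases eq_or_ne t [] with rfl | ht
    · exact ⟨[], x, [], rfl, by simp, by simp⟩
    obtain ⟨L, m, R, rfl, hL, hR⟩ := ih ht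
    by_cases hxm : x < m
    · exact ⟨x :: L, m, R, rfl, by grind, hR⟩
    · refine ⟨[], x, L ++ m :: R, rfl, by simp, ?_⟩
      grind

end List

open List

theorem ss_nil : ss [] = [] := by rw [ss]

theorem ss_append_cons {L R : List ℕ} {m : ℕ} (hL : ∀ x ∈ L, x < m) (hR : ∀ x ∈ R, x ≤ m) :
    ss (L ++ m :: R) = ss L ++ ss R ++ [m] := by
  have hmax : (L ++ m :: R).foldr max 0 = m :=
    le_antisymm (max_le_of_forall_le _ _ (by grind)) (le_max_of_le (by simp) le_rfl)
  obtain ⟨x, xs, hx⟩ := exists_cons_of_ne_nil (show L ++ m :: R ≠ [] by simp)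
  rw [hx, ss, ← hx, hmax, takeWhile_append_of_pos (by grind),
    dropWhile_append_of_pos (by grind)]
  simp

@[elab_as_elim]
theorem ss_induction {motive : List ℕ → Prop} (nil : motive [])
    (append_cons : ∀ L m R, (∀ x ∈ L, x < m) → (∀ x ∈ R, x ≤ m) →
      motive L → motive R → motive (L ++ m :: R))
    (l : List ℕ) : motive l := by
  rcases eq_or_ne l [] with rfl | hl
  · exact nil
  obtain ⟨L, m, R, rfl, hL, hR⟩ := exists_eq_append_cons_first_max hl
  exact append_cons L m R hL hR (ss_induction nil append_cons L)
    (ss_induction nil append_cons R)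
termination_by l.length
decreasing_by all_goals (subst_vars; simp only [length_append, length_cons]; omega)

theorem ss_perm (l : List ℕ) : ss l ~ l := by
  induction l using ss_induction with
  | nil => rw [ss_nil]
  | append_cons L m R hL hR ihL ihR =>
    rw [ss_append_cons hL hR]
    exact ((ihL.append ihR).append_right [m]).trans
      ((perm_append_singleton m _).trans perm_middle.symm)

theorem ss_filter_of_monotone {p : ℕ → Bool} (hp : Monotone p) (l : List ℕ) :
    (ss l).filter p = ss (l.filter p) := by
  induction l using ss_induction with
  | nil => simp [ss_nil]
  | append_cons L m R hL hR ihL ihR =>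
    rw [ss_append_cons hL hR]
    by_cases hm : p m
    · rw [filter_append, filter_append, ihL, ihR, filter_append, filter_cons_of_pos (l := R) hm,
        ss_append_cons (fun x hx => hL x (mem_of_mem_filter hx))
          (fun x hx => hR x (mem_of_mem_filter hx))]
      simp [hm]
    · have hfalse : ∀ x ≤ m, p x = false := fun x hx =>
        eq_false_of_ne_true fun h => hm (le_antisymm le_top (h ▸ hp hx))
      rw [filter_eq_nil_iff.2 fun x hx => by grind [(ss_perm _).mem_iff],
        filter_eq_nil_iff.2 fun x hx => by grind, ss_nil]

theorem pair_sublist_ss {x y : ℕ} {l : List ℕ} (hxy : x < y) (h : [x, y] <+ l) :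
    [x, y] <+ ss l := by
  induction l using ss_induction with
  | nil => simp at h
  | append_cons L m R hL hR ihL ihR =>
    rw [ss_append_cons hL hR, append_assoc]
    rcases pair_sublist_append_iff.1 h with h | ⟨hx, hy⟩ | h
    · exact (ihL h).trans (sublist_append_left _ _)
    · refine pair_sublist_append_iff.2 (.inr (.inl ⟨(ss_perm L).mem_iff.2 hx, ?_⟩))
      grind [(ss_perm R).mem_iff]
    · rcases sublist_cons_iff.1 h with h | ⟨r, hr, h⟩
      · exact ((ihR h).trans (sublist_append_left _ _)).trans (sublist_append_right _ _)
      · grind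

def SmallerBefore (a : ℕ) (l : List ℕ) : Prop := ∀ x ∈ l, x < a → [x, a] <+ l

namespace SmallerBefore

variable {a : ℕ}

theorem of_append_left {A B : List ℕ} (h : SmallerBefore a (A ++ B)) (ha : a ∉ B) :
    SmallerBefore a A := fun x hx hxa => by
  rcases pair_sublist_append_iff.1 (h x (mem_append_left B hx) hxa) with h | ⟨-, h⟩ | h
  · exact h
  · exact absurd h ha
  · exact absurd (h.subset (by simp)) ha

theorem of_append_right {A B : List ℕ} (h : SmallerBefore a (A ++ B)) (hd : (A ++ B).Nodup) :
    SmallerBefore a B := fun x hx hxa => by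
  have hxA : x ∉ A := fun hxA => (nodup_append.1 hd).2.2 x hxA x hx rfl
  rcases pair_sublist_append_iff.1 (h x (mem_append_right A hx) hxa) with h | ⟨h, -⟩ | h
  · exact absurd (h.subset (by simp)) hxA
  · exact absurd h hxA
  · exact h

theorem ss {l : List ℕ} (h : SmallerBefore a l) : SmallerBefore a (ss l) := fun x hx hxa =>
  pair_sublist_ss hxa (h x ((ss_perm l).mem_iff.1 hx) hxa)

theorem pairwise_of_erase {l : List ℕ} (hl : l.Nodup)
    (ha : SmallerBefore a l) (h₁ : (l.erase a).Pairwise (· < ·))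
    (h₂ : (l.filter (a ≤ ·)).Pairwise (· < ·)) : l.Pairwise (· < ·) := by
  rw [pairwise_iff_forall_sublist] at h₁ h₂ ⊢
  intro x y hxy
  by_cases hx : x = a
  · subst hx
    rcases lt_trichotomy x y with hlt | rfl | hgt
    · exact hlt
    · exact absurd hxy (nodup_iff_sublist.1 hl x)
    · exact absurd (ha y (hxy.subset (by simp)) hgt) (hl.not_pair_sublist_swap hxy)
  by_cases hy : y = a
  · subst hy
    by_cases hyx : y ≤ x
    · exact h₂ (by simpa [hyx] using hxy.filter (y ≤ ·))
    · exact not_le.1 hyx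
  · exact h₁ (by simpa [erase_of_not_mem, Ne.symm hx, Ne.symm hy] using hxy.erase a)

end SmallerBefore

theorem ss_erase {a : ℕ} {l : List ℕ} (hl : l.Nodup) (ha : SmallerBefore a l) :
    (ss l).erase a = ss (l.erase a) := by
  induction l using ss_induction with
  | nil => simp [ss_nil]
  | append_cons L m R hL hR ihL ihR =>
    have hl' : (L ++ [m] ++ R).Nodup := by simpa using hl
    have ha' : SmallerBefore a (L ++ [m] ++ R) := by simpa using ha
    rw [ss_append_cons hL hR]
    by_cases haL : a ∈ L
    · have haR : a ∉ m :: R := fun h => (nodup_append.1 hl).2.2 a haL a h rfl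
      rw [erase_append_left _ (mem_append_left _ ((ss_perm L).mem_iff.2 haL)),
        erase_append_left _ ((ss_perm L).mem_iff.2 haL), erase_append_left _ haL,
        ihL ((sublist_append_left _ _).nodup hl)
          (ha.of_append_left haR), ss_append_cons (fun x hx => hL x (mem_of_mem_erase hx)) hR]
    have hmR : m ∉ R := (nodup_cons.1 ((sublist_append_right _ _).nodup hl)).1
    by_cases ham : a = m
    · subst ham
      have hRnil : R = [] := eq_nil_iff_forall_not_mem.2 fun x hx => by
        have hxa : x < a := lt_of_le_of_ne (hR x hx) (by grind)
        exact hmR ((ha'.of_append_right hl' x hx hxa).subset (by simp))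
      subst hRnil
      rw [ss_nil, append_nil, erase_append_right _ (by rwa [(ss_perm L).mem_iff]),
        erase_append_right _ haL]
      simp
    by_cases haR : a ∈ R
    · rw [erase_append_left _ (mem_append_right _ ((ss_perm R).mem_iff.2 haR)),
        erase_append_right _ (by rwa [(ss_perm L).mem_iff]), erase_append_right _ haL,
        erase_cons_tail (by simpa using Ne.symm ham),
        ihR ((sublist_append_right _ _).nodup hl') (ha'.of_append_right hl'),
        ss_append_cons hL (fun x hx => hR x (mem_of_mem_erase hx))]
    · have haL' : a ∉ L ++ m :: R := by
        simp only [mem_append, mem_cons, not_or]; exact ⟨haL, ham, haR⟩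
      have haSS : a ∉ ss L ++ ss R ++ [m] := by
        rwa [← ss_append_cons hL hR, (ss_perm _).mem_iff]
      rw [erase_of_not_mem haSS, erase_of_not_mem haL', ss_append_cons hL hR]

theorem ss_of_pairwise {l : List ℕ} (h : l.Pairwise (· < ·)) : ss l = l := by
  induction l using ss_induction with
  | nil => exact ss_nil
  | append_cons L m R hL hR ihL ihR =>
    have hRnil : R = [] := eq_nil_iff_forall_not_mem.2 fun x hx =>
      (hR x hx).not_gt ((pairwise_cons.1 (pairwise_append.1 h).2.1).1 x hx)
    subst hRnil
    rw [ss_append_cons hL hR, ihL (pairwise_append.1 h).1, ss_nil, append_nil]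

theorem pairwise_iterate_ss_of_le {l : List ℕ} {k j : ℕ} (hkj : k ≤ j)
    (h : (ss^[k] l).Pairwise (· < ·)) : (ss^[j] l).Pairwise (· < ·) := by
  obtain ⟨d, rfl⟩ := Nat.exists_eq_add_of_le hkj
  rwa [add_comm, Function.iterate_add_apply, Function.iterate_fixed (ss_of_pairwise h)]

theorem iterate_ss_perm (k : ℕ) (l : List ℕ) : ss^[k] l ~ l := by
  induction k with
  | zero => rfl
  | succ k ih => rw [Function.iterate_succ_apply']; exact (ss_perm _).trans ih

theorem iterate_ss_append_singleton {Y : List ℕ} {m : ℕ} (hY : ∀ x ∈ Y, x < m) (k : ℕ) :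
    ss^[k] (Y ++ [m]) = ss^[k] Y ++ [m] := by
  induction k with
  | zero => rfl
  | succ k ih =>
    rw [Function.iterate_succ_apply', ih, Function.iterate_succ_apply',
      ss_append_cons (R := []) (fun x hx => hY x ((iterate_ss_perm k Y).mem_iff.1 hx)) (by simp),
      ss_nil, append_nil]

theorem exists_pairwise_iterate_ss {l : List ℕ} (hl : l.Nodup) :
    ∃ k, (ss^[k] l).Pairwise (· < ·) := by
  rcases eq_or_ne l [] with rfl | hne
  · exact ⟨0, by simp⟩
  obtain ⟨L, m, R, rfl, hL, hR⟩ := exists_eq_append_cons_first_max hne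
  have hperm : ss L ++ ss R ~ L ++ R := (ss_perm L).append (ss_perm R)
  have hY : ∀ x ∈ ss L ++ ss R, x < m := by
    intro x hx
    rcases mem_append.1 (hperm.mem_iff.1 hx) with hx | hx
    · exact hL x hx
    · exact (hR x hx).lt_of_ne fun h => (nodup_middle.1 hl |> nodup_cons.1).1 (by simp [← h, hx])
  obtain ⟨k, hk⟩ := exists_pairwise_iterate_ss (hperm.nodup_iff.2 (nodup_middle.1 hl).of_cons)
  refine ⟨k + 1, ?_⟩
  rw [Function.iterate_succ_apply, ss_append_cons hL hR, iterate_ss_append_singleton hY,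
    pairwise_append]
  exact ⟨hk, pairwise_singleton _ _, fun x hx y hy => (mem_singleton.1 hy) ▸
    hY x ((iterate_ss_perm k _).mem_iff.1 hx)⟩
termination_by l.length
decreasing_by all_goals (subst_vars; simp [(ss_perm L).length_eq, (ss_perm R).length_eq])

theorem met_le_iff {l : List ℕ} (hl : l.Nodup) {k : ℕ} :
    met l ≤ k ↔ (ss^[k] l).Pairwise (· < ·) :=
  ⟨fun h => pairwise_iterate_ss_of_le h (Nat.sInf_mem (exists_pairwise_iterate_ss hl)),
    fun h => Nat.sInf_le h⟩

theorem pairwise_iterate_ss_append_singleton_iff {σ : List ℕ} {a : ℕ} (hl : (σ ++ [a]).Nodup)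
    (k : ℕ) : (ss^[k] (σ ++ [a])).Pairwise (· < ·) ↔
      (ss^[k] σ).Pairwise (· < ·) ∧ (ss^[k] ((σ ++ [a]).filter (a ≤ ·))).Pairwise (· < ·) := by
  have hσa : a ∉ σ := fun h => (nodup_append.1 hl).2.2 a h a (mem_singleton_self a) rfl
  have hinv : SmallerBefore a (ss^[k] (σ ++ [a])) ∧ (ss^[k] (σ ++ [a])).erase a = ss^[k] σ := by
    induction k with
    | zero =>
      refine ⟨fun x hx hxa => ?_, by simp [erase_append_right _ hσa]⟩
      have hxσ : x ∈ σ := by simpa [hxa.ne] using hx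
      exact (singleton_sublist.2 hxσ).append (Sublist.refl [a])
    | succ k ih =>
      rw [Function.iterate_succ_apply', Function.iterate_succ_apply',
        ss_erase ((iterate_ss_perm k _).nodup_iff.2 hl) ih.1, ih.2]
      exact ⟨ih.1.ss, rfl⟩
  have hup : (ss^[k] (σ ++ [a])).filter (a ≤ ·) = ss^[k] ((σ ++ [a]).filter (a ≤ ·)) :=
    Function.Commute.iterate_right (g := ss)
      (ss_filter_of_monotone fun x y hxy => by simpa [Bool.le_iff_imp] using (le_trans · hxy)) k _
  rw [← hinv.2, ← hup]
  exact ⟨fun h => ⟨h.sublist erase_sublist, h.sublist filter_sublist⟩,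
    fun h => hinv.1.pairwise_of_erase ((iterate_ss_perm k _).nodup_iff.2 hl) h.1 h.2⟩

theorem met_append_singleton {σ : List ℕ} {a : ℕ} (hl : (σ ++ [a]).Nodup) :
    met (σ ++ [a]) = max (met σ) (met ((σ ++ [a]).filter (a ≤ ·))) :=
  eq_of_forall_ge_iff fun k => by
    rw [max_le_iff, met_le_iff hl, met_le_iff ((sublist_append_left _ _).nodup hl),
      met_le_iff (filter_sublist.nodup hl)]
    exact pairwise_iterate_ss_append_singleton_iff hl k

theorem stmt_1_general (n : ℕ) (π : List ℕ) (hπ : π.Perm (List.range' 1 n)) :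
    met π = max (met π.dropLast) (met (π.filter (fun x => (π.getLast?).getD 0 ≤ x))) := by
  rcases π.eq_nil_or_concat' with rfl | ⟨σ, a, rfl⟩
  · simp
  · rw [getLast?_concat, Option.getD_some, dropLast_concat]
    exact met_append_singleton (hπ.nodup_iff.2 nodup_range')

/-- Lemma 5.5: for all `π ∈ Sₙ`, `met(π) = max(met(π[:n]), met(π_{≥ π_n}))`. -/
theorem stmt_1 (n : ℕ) (hn : 1 ≤ n) (π : List ℕ) (hπ : π.Perm (List.range' 1 n)) :
    met π = max (met π.dropLast) (met (π.filter (fun x => (π.getLast?).getD 0 ≤ x))) :=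
  stmt_1_general n π hπ
end

section
/- Let π ∈ S_n and let 1 ≤ m ≤ n. Then s(π_{≥m}) occurs as a (not necessarily contiguous) subsequence of s(π), where π_{≥m} denotes the subsequence of entries of π greater than or equal to m. -/
namespace List

variable {α : Type*} {p q : α → Bool}

private theorem not_or_eq_of_imp (h : ∀ a, q a = false → p a = true) :
    (fun a => !p a || q a) = q := by
  funext a; cases hpa : p a <;> cases hqa : q a <;> simp_all

theorem takeWhile_filter_of_imp (h : ∀ a, q a = false → p a = true) (l : List α) :
    (l.filter p).takeWhile q = (l.takeWhile q).filter p := by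
  rw [takeWhile_filter, not_or_eq_of_imp h]

theorem drop_one_dropWhile_filter_of_imp (h : ∀ a, q a = false → p a = true) (l : List α) :
    ((l.filter p).dropWhile q).drop 1 = ((l.dropWhile q).drop 1).filter p := by
  rw [dropWhile_filter, not_or_eq_of_imp h]
  cases hd : l.dropWhile q with
  | nil => rfl
  | cons x t =>
    have hx : p x = true := h x (by simpa [hd] using head_dropWhile_not q (l := l) (by simp [hd]))
    simp [hx]

end List

theorem foldr_max_filter_eq_of_max {p : ℕ → Bool} {l : List ℕ} (hp : p (l.foldr max 0) = true) :
    (l.filter p).foldr max 0 = l.foldr max 0 := by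
  cases l with
  | nil => rfl
  | cons x xs =>
    refine le_antisymm ?_ (List.le_max_of_le' 0 (List.mem_filter.mpr ⟨foldrMaxMem x xs, hp⟩) le_rfl)
    exact List.max_le_of_forall_le _ _
      fun y hy => List.le_max_of_le' 0 (List.mem_filter.mp hy).1 le_rfl

theorem ss_of_ne_nil {l : List ℕ} (hl : l ≠ []) :
    ss l = ss (l.takeWhile (fun y => y ≠ l.foldr max 0)) ++
      ss ((l.dropWhile (fun y => y ≠ l.foldr max 0)).drop 1) ++ [l.foldr max 0] := by
  cases l with
  | nil => exact absurd rfl hl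
  | cons x xs => rw [ss]

theorem ss_filter_sublist_of_monotone {p : ℕ → Bool} (hp : Monotone p) (l : List ℕ) :
    (ss (l.filter p)).Sublist (ss l) := by
  by_cases hf : l.filter p = []
  · rw [hf, ss]; exact List.nil_sublist _
  have hl : l ≠ [] := by rintro rfl; exact hf rfl
  set M := l.foldr max 0
  have hMl : M ∈ l := by
    obtain ⟨x, xs, rfl⟩ := List.exists_cons_of_ne_nil hl
    exact foldrMaxMem x xs
  have hpM : p M = true := by
    obtain ⟨y, hy⟩ := List.exists_mem_of_ne_nil _ hf
    rw [List.mem_filter] at hy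
    exact eq_top_mono (hp (List.le_max_of_le' 0 hy.1 le_rfl)) hy.2
  have hsplit : ∀ y, decide (y ≠ M) = false → p y = true := by
    intro y hy
    rw [decide_eq_false_iff_not, not_not] at hy
    exact hy ▸ hpM
  rw [ss_of_ne_nil hl, ss_of_ne_nil hf, foldr_max_filter_eq_of_max hpM,
    List.takeWhile_filter_of_imp hsplit, List.drop_one_dropWhile_filter_of_imp hsplit]
  exact ((ss_filter_sublist_of_monotone hp _).append (ss_filter_sublist_of_monotone hp _)).append
    (List.Sublist.refl _)
termination_by l.length
decreasing_by
  · exact takeWhileLt _ _ hMl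
  · exact dropWhileDropLt _ _ hl

theorem stmt_4_general (m : ℕ) (π : List ℕ) :
    (ss (π.filter (fun x => m ≤ x))).Sublist (ss π) := by
  refine ss_filter_sublist_of_monotone (fun a b hab => ?_) π
  simp only [Bool.le_iff_imp, decide_eq_true_eq]
  exact (·.trans hab)

/-- Lemma 5.3: for `π ∈ Sₙ` and `1 ≤ m ≤ n`, `s(π_{≥ m})` occurs as a subsequence of `s(π)`. -/
theorem stmt_4 (n m : ℕ) (hm : 1 ≤ m) (hmn : m ≤ n) (π : List ℕ)
    (hπ : π.Perm (List.range' 1 n)) :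
    (ss (π.filter (fun x => m ≤ x))).Sublist (ss π) :=
  stmt_4_general m π
end

section
/- For all π ∈ S_n' and all 1 ≤ i ≤ met(π), the sequence (row_π(c_{π,i,j}))_{j=1}^{|C_{π,i}|} is strictly increasing. -/
/-!
Let `P` be the part of `s^{i-1}(π)` before `0`, with right-to-left maxima `c_1, …, c_k` and
blocks `b_1, …, b_k`. Splitting at the maximum and using that `0` is the least entry, one sees
that the part of `s^i(π)` before `0` is `s(b_1) ⋯ s(b_k)`. Since `s(b)` ends with `max b` and
every other entry is smaller, each `c ∈ C_{π,i+1}` is the maximum of some block `b_j`, and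
`leftof` maps `C_{π,i+1}` in order onto a subsequence of `C_{π,i}`. As `row` is constant along
`leftof`, the rows along column `i+1` form a subsequence of the rows along column `i`, and in
column `1` the rows are the positions `1, 2, …`.
-/

namespace StackSorting

open List

theorem foldr_max_eq {l : List ℕ} {m : ℕ} (hm : m ∈ l) (hle : ∀ y ∈ l, y ≤ m) :
    l.foldr max 0 = m :=
  le_antisymm (max_le_of_forall_le l m hle) (le_max_of_le hm le_rfl)

theorem exists_eq_append_cons_max {l : List ℕ} (hl : l ≠ []) :
    ∃ T m D, l = T ++ m :: D ∧ (∀ y ∈ T, y < m) ∧ ∀ y ∈ D, y ≤ m := by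
  obtain ⟨m, hm, hle⟩ : ∃ m ∈ l, ∀ y ∈ l, y ≤ m := by
    obtain ⟨x, xs, rfl⟩ := exists_cons_of_ne_nil hl
    exact ⟨_, foldrMaxMem x xs, fun y hy => le_max_of_le hy le_rfl⟩
  obtain ⟨T, D, rfl, hmT⟩ := eq_append_cons_of_mem hm
  refine ⟨T, m, D, rfl, fun y hy => ?_, fun y hy => hle y (by simp [hy])⟩
  exact (hle y (by simp [hy])).lt_of_ne (by rintro rfl; exact hmT hy)

theorem induction_on_max {P : List ℕ → Prop} (nil : P [])
    (append_cons : ∀ T m D, (∀ y ∈ T, y < m) → (∀ y ∈ D, y ≤ m) → P T → P D →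
      P (T ++ m :: D)) (l : List ℕ) : P l := by
  induction h : l.length using Nat.strong_induction_on generalizing l with
  | _ n ih =>
    rcases eq_or_ne l [] with rfl | hl
    · exact nil
    obtain ⟨T, m, D, rfl, hT, hD⟩ := exists_eq_append_cons_max hl
    simp only [length_append, length_cons] at h
    exact append_cons T m D hT hD (ih _ (by omega) T rfl) (ih _ (by omega) D rfl)

theorem ss_nil : ss [] = [] := by
  rw [ss]

theorem ss_append_cons {T D : List ℕ} {m : ℕ} (hT : ∀ y ∈ T, y < m) (hD : ∀ y ∈ D, y ≤ m) :
    ss (T ++ m :: D) = ss T ++ ss D ++ [m] := by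
  have hmax : (T ++ m :: D).foldr max 0 = m :=
    foldr_max_eq (by simp)
      (by simpa [or_imp, forall_and] using ⟨fun y hy => (hT y hy).le, hD⟩)
  have hne : ∀ y ∈ T, decide (y ≠ m) = true := by simpa using fun y hy => (hT y hy).ne
  obtain ⟨x, xs, hl⟩ :=
    exists_cons_of_ne_nil (append_ne_nil_of_right_ne_nil T (cons_ne_nil m D))
  rw [hl, ss, ← hl, hmax, takeWhile_append_of_pos hne, dropWhile_append_of_pos hne]
  simp

theorem ss_perm (l : List ℕ) : ss l ~ l := by
  induction l using induction_on_max with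
  | nil => rw [ss_nil]
  | append_cons T m D hT hD ihT ihD =>
    rw [ss_append_cons hT hD]
    calc ss T ++ ss D ++ [m] ~ T ++ D ++ [m] := (ihT.append ihD).append_right _
      _ ~ T ++ m :: D := by rw [append_assoc]; exact perm_append_comm.append_left T

theorem mem_ss {l : List ℕ} {a : ℕ} : a ∈ ss l ↔ a ∈ l :=
  (ss_perm l).mem_iff

theorem rtlMax_sublist (l : List ℕ) : rtlMax l <+ l := by
  induction l with
  | nil => exact nil_sublist _
  | cons x xs ih =>
    rw [rtlMax]
    split
    · exact ih.cons_cons x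
    · exact ih.cons x

theorem rtlMax_append_sublist (A B : List ℕ) : rtlMax (A ++ B) <+ rtlMax A ++ rtlMax B := by
  induction A with
  | nil => exact Sublist.refl _
  | cons x A ih =>
    rw [cons_append, rtlMax, rtlMax]
    split_ifs with hAB hA hA
    · exact ih.cons_cons x
    · exact absurd (fun y hy => hAB y (mem_append_left B hy)) hA
    · exact ih.cons x
    · exact ih

theorem rtlMax_append_singleton {A : List ℕ} {m : ℕ} (hA : ∀ y ∈ A, y ≤ m) :
    rtlMax (A ++ [m]) = [m] := by
  induction A with
  | nil => simp [rtlMax]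
  | cons x A ih =>
    have hx : ¬ ∀ y ∈ A ++ [m], y < x := fun h => (hA x mem_cons_self).not_gt (h m (by simp))
    rw [cons_append, rtlMax, if_neg hx, ih fun y hy => hA y (mem_cons_of_mem x hy)]

theorem rtlMax_ss_sublist (b : List ℕ) : rtlMax (ss b) <+ [b.foldr max 0] := by
  rcases eq_or_ne b [] with rfl | hb
  · rw [ss_nil]; exact nil_sublist _
  obtain ⟨T, m, D, rfl, hT, hD⟩ := exists_eq_append_cons_max hb
  have hle : ∀ y ∈ T ++ m :: D, y ≤ m := by
    simpa [or_imp, forall_and] using ⟨fun y hy => (hT y hy).le, hD⟩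
  rw [ss_append_cons hT hD, foldr_max_eq (by simp) hle, rtlMax_append_singleton]
  intro y hy
  exact hle y (by simpa [mem_ss] using Or.imp_right (mem_cons_of_mem m) (mem_append.1 hy))

theorem blocksOf_cons_ne_nil (x : ℕ) (xs : List ℕ) : blocksOf (x :: xs) ≠ [] := by
  rw [blocksOf]
  split
  · exact cons_ne_nil _ _
  · split <;> exact cons_ne_nil _ _

theorem length_blocksOf (l : List ℕ) : (blocksOf l).length = (rtlMax l).length := by
  induction l with
  | nil => simp [blocksOf, rtlMax]
  | cons x xs ih =>
    rw [blocksOf, rtlMax]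
    split
    · simp [ih]
    · rename_i hx
      obtain ⟨y, ys, rfl⟩ := exists_cons_of_ne_nil (by rintro rfl; simp at hx : xs ≠ [])
      obtain ⟨b, bs, hb⟩ := exists_cons_of_ne_nil (blocksOf_cons_ne_nil y ys)
      rw [hb] at ih ⊢
      simpa using ih

theorem flatten_blocksOf_cons_of_not_rtlMax {x : ℕ} {xs : List ℕ}
    (hx : ¬ ∀ y ∈ xs, y < x) :
    (blocksOf (x :: xs)).flatten = x :: (blocksOf xs).flatten := by
  rw [blocksOf, if_neg hx]
  split <;> simp_all

theorem flatten_blocksOf_append_rtlMax_perm (l : List ℕ) :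
    (blocksOf l).flatten ++ rtlMax l ~ l := by
  induction l with
  | nil => simp [blocksOf, rtlMax]
  | cons x xs ih =>
    by_cases hx : ∀ y ∈ xs, y < x
    · rw [blocksOf, rtlMax, if_pos hx, if_pos hx, flatten_cons, nil_append]
      exact perm_middle.trans (ih.cons x)
    · rw [flatten_blocksOf_cons_of_not_rtlMax hx, rtlMax, if_neg hx]
      exact ih.cons x

theorem blocksOf_append_cons {T P : List ℕ} {m : ℕ} (hT : ∀ y ∈ T, y < m)
    (hP : ∀ y ∈ P, y < m) : blocksOf (T ++ m :: P) = T :: blocksOf P := by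
  induction T with
  | nil => rw [nil_append, blocksOf, if_pos hP]
  | cons x T ih =>
    have hx : ¬ ∀ y ∈ T ++ m :: P, y < x :=
      fun h => (hT x mem_cons_self).not_gt (h m (by simp))
    rw [cons_append, blocksOf, if_neg hx, ih fun y hy => hT y (mem_cons_of_mem x hy)]

def beforeZero (l : List ℕ) : List ℕ := l.takeWhile (· ≠ 0)

theorem beforeZero_sublist (l : List ℕ) : beforeZero l <+ l :=
  takeWhile_sublist _

theorem zero_notMem_beforeZero (l : List ℕ) : 0 ∉ beforeZero l := fun h => by
  simpa using mem_takeWhile_imp h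

theorem beforeZero_append_of_mem {A : List ℕ} (B : List ℕ) (h0 : 0 ∈ A) :
    beforeZero (A ++ B) = beforeZero A := by
  obtain ⟨s, t, rfl, h0s⟩ := eq_append_cons_of_mem h0
  have hs : ∀ y ∈ s, decide (y ≠ 0) = true :=
    fun y hy => decide_eq_true (by rintro rfl; exact h0s hy)
  simp only [beforeZero, append_assoc, cons_append, takeWhile_append_of_pos hs]
  simp

theorem beforeZero_append_of_notMem {A : List ℕ} (B : List ℕ) (h0 : 0 ∉ A) :
    beforeZero (A ++ B) = A ++ beforeZero B :=
  takeWhile_append_of_pos fun y hy => decide_eq_true (by rintro rfl; exact h0 hy)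

theorem beforeZero_ss {l : List ℕ} (hnd : l.Nodup) (h0 : 0 ∈ l) :
    beforeZero (ss l) = ((blocksOf (beforeZero l)).map ss).flatten := by
  induction l using induction_on_max with
  | nil => simp at h0
  | append_cons T m D hT hD ihT ihD =>
    obtain ⟨hndT, hndmD, -⟩ := nodup_append'.1 hnd
    obtain ⟨hmD, hndD⟩ := nodup_cons.1 hndmD
    have hD' : ∀ y ∈ D, y < m := fun y hy => (hD y hy).lt_of_ne (by rintro rfl; exact hmD hy)
    rw [ss_append_cons hT hD, append_assoc]
    by_cases h0T : 0 ∈ T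
    · rw [beforeZero_append_of_mem _ (mem_ss.2 h0T), beforeZero_append_of_mem _ h0T,
        ihT hndT h0T]
    rcases eq_or_ne m 0 with rfl | hm0
    · obtain rfl : T = [] := eq_nil_iff_forall_not_mem.2 fun y hy => by simpa using hT y hy
      obtain rfl : D = [] := eq_nil_iff_forall_not_mem.2 fun y hy => by simpa using hD' y hy
      simp [beforeZero, ss_nil, blocksOf]
    have h0D : 0 ∈ D := by simpa [h0T, Ne.symm hm0] using h0
    have hbz : beforeZero (m :: D) = m :: beforeZero D := by simp [beforeZero, hm0]
    rw [beforeZero_append_of_notMem _ (mt mem_ss.1 h0T), beforeZero_append_of_mem _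
      (mem_ss.2 h0D), beforeZero_append_of_notMem _ h0T, hbz,
      blocksOf_append_cons hT fun y hy => hD' y ((beforeZero_sublist D).subset hy),
      map_cons, flatten_cons, ihD hndD h0D]

theorem flatten_map_ss_perm (bs : List (List ℕ)) : (bs.map ss).flatten ~ bs.flatten := by
  induction bs with
  | nil => rfl
  | cons b bs ih => exact (ss_perm b).append ih

/-- Each `s(b_j)` contributes at most one right-to-left maximum, namely `max b_j`, and the
lookup sends it to `c_j`; empty blocks have "maximum" `0`, which never occurs. -/
theorem rtlMax_flatten_map_ss_lookup_sublist (bs : List (List ℕ)) {cs : List ℕ}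
    (hlen : bs.length = cs.length) (hnd : bs.flatten.Nodup) (h0 : 0 ∉ bs.flatten) :
    (rtlMax (bs.map ss).flatten).map
      (fun c => cs.getD ((bs.map fun b => b.foldr max 0).idxOf c) 0) <+ cs := by
  induction bs generalizing cs with
  | nil => simp [rtlMax]
  | cons b bs ih =>
    obtain ⟨c, cs, rfl⟩ := exists_cons_of_length_eq_add_one hlen.symm
    rw [flatten_cons] at hnd h0
    obtain ⟨-, hndbs, hdisj⟩ := nodup_append'.1 hnd
    set f := fun x => (c :: cs).getD (((b :: bs).map fun b => b.foldr max 0).idxOf x) 0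
    set g := fun x => cs.getD ((bs.map fun b => b.foldr max 0).idxOf x) 0
    have hfg : ∀ x ∈ rtlMax (bs.map ss).flatten, f x = g x := by
      intro x hx
      have hxbs : x ∈ bs.flatten :=
        (flatten_map_ss_perm bs).subset ((rtlMax_sublist _).subset hx)
      have hxm : b.foldr max 0 ≠ x := by
        rcases eq_or_ne b [] with rfl | hb
        · rintro rfl
          exact h0 (mem_append_right _ hxbs)
        · obtain ⟨y, ys, rfl⟩ := exists_cons_of_ne_nil hb
          rintro rfl
          exact hdisj (foldrMaxMem y ys) hxbs
      simp only [f, g, map_cons, idxOf_cons_ne _ hxm, getD_cons_succ]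
    have hhead : (rtlMax (ss b)).map f <+ [c] := by
      simpa [f] using (rtlMax_ss_sublist b).map f
    calc (rtlMax (ss b ++ (bs.map ss).flatten)).map f
        <+ (rtlMax (ss b) ++ rtlMax (bs.map ss).flatten).map f :=
          (rtlMax_append_sublist _ _).map f
      _ = (rtlMax (ss b)).map f ++ (rtlMax (bs.map ss).flatten).map g := by
          rw [map_append, map_congr_left hfg]
      _ <+ [c] ++ cs :=
          hhead.append (ih (Nat.succ_inj.1 hlen) hndbs fun h => h0 (mem_append_right _ h))

theorem ss_iterate_perm (π : List ℕ) (k : ℕ) : ss^[k] π ~ π := by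
  induction k with
  | zero => rfl
  | succ k ih =>
    rw [Function.iterate_succ_apply']
    exact (ss_perm _).trans ih

section Columns

variable {π : List ℕ}

theorem prefixAt_nodup (hnd : π.Nodup) (i : ℕ) : (prefixAt π i).Nodup :=
  (beforeZero_sublist _).nodup ((ss_iterate_perm π _).nodup_iff.2 hnd)

theorem prefixAt_succ (hnd : π.Nodup) (h0 : 0 ∈ π) {i : ℕ} (hi : 1 ≤ i) :
    prefixAt π (i + 1) = ((blocksAt π i).map ss).flatten := by
  obtain ⟨k, rfl⟩ := Nat.exists_eq_add_of_le' hi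
  change beforeZero (ss^[k + 1] π) = ((blocksOf (beforeZero (ss^[k] π))).map ss).flatten
  rw [Function.iterate_succ_apply']
  exact beforeZero_ss ((ss_iterate_perm π k).nodup_iff.2 hnd)
    ((ss_iterate_perm π k).mem_iff.2 h0)

theorem mem_prefixAt_of_mem_prefixAt_succ (hnd : π.Nodup) (h0 : 0 ∈ π) {i : ℕ}
    (hi : 1 ≤ i) {v : ℕ} (hv : v ∈ prefixAt π (i + 1)) :
    v ∈ prefixAt π i ∧ v ∉ colSeqAt π i := by
  rw [prefixAt_succ hnd h0 hi] at hv
  have hperm := flatten_blocksOf_append_rtlMax_perm (prefixAt π i)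
  have hvb : v ∈ (blocksAt π i).flatten := (flatten_map_ss_perm _).subset hv
  exact ⟨hperm.subset (mem_append_left _ hvb),
    (nodup_append'.1 (hperm.nodup_iff.2 (prefixAt_nodup hnd i))).2.2 hvb⟩

theorem prefixAt_subset_of_le (hnd : π.Nodup) (h0 : 0 ∈ π) {i k : ℕ}
    (hi : 1 ≤ i) (hik : i ≤ k) : prefixAt π k ⊆ prefixAt π i := by
  induction k, hik using Nat.le_induction with
  | base => exact Subset.refl _
  | succ k hik ih =>
    exact fun v hv => ih (mem_prefixAt_of_mem_prefixAt_succ hnd h0 (hi.trans hik) hv).1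

theorem colOf_eq_of_mem (hnd : π.Nodup) (h0 : 0 ∈ π) {i : ℕ} (hi : 1 ≤ i)
    {c : ℕ} (hc : c ∈ colSeqAt π i) : colOf π c = i := by
  have hmem : i ∈ {i' | 1 ≤ i' ∧ c ∈ colSeqAt π i'} := ⟨hi, hc⟩
  refine le_antisymm (Nat.sInf_le hmem) ?_
  obtain ⟨hi', hci'⟩ : 1 ≤ colOf π c ∧ c ∈ colSeqAt π (colOf π c) := Nat.sInf_mem ⟨i, hmem⟩
  by_contra! hlt
  have hc' :=
    prefixAt_subset_of_le hnd h0 (Nat.le_add_left 1 _) hlt ((rtlMax_sublist _).subset hc)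
  exact (mem_prefixAt_of_mem_prefixAt_succ hnd h0 hi' hc').2 hci'

theorem map_leftOf_colSeqAt_succ_sublist (hnd : π.Nodup) (h0 : 0 ∈ π) {i : ℕ}
    (hi : 1 ≤ i) : (colSeqAt π (i + 1)).map (leftOf π) <+ colSeqAt π i := by
  have hlookup : ∀ c ∈ colSeqAt π (i + 1), leftOf π c =
      (colSeqAt π i).getD (((blocksAt π i).map fun b => b.foldr max 0).idxOf c) 0 := by
    intro c hc
    rw [leftOf, colOf_eq_of_mem hnd h0 (Nat.le_add_left 1 i) hc, Nat.add_sub_cancel]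
  have hcol : colSeqAt π (i + 1) = rtlMax ((blocksAt π i).map ss).flatten := by
    rw [colSeqAt, prefixAt_succ hnd h0 hi]
  have hperm := flatten_blocksOf_append_rtlMax_perm (prefixAt π i)
  rw [map_congr_left hlookup, hcol]
  exact rtlMax_flatten_map_ss_lookup_sublist _ (length_blocksOf _)
    ((sublist_append_left _ _).nodup (hperm.nodup_iff.2 (prefixAt_nodup hnd i)))
    fun h => zero_notMem_beforeZero _ (hperm.subset (mem_append_left _ h))

theorem rowOf_eq_rowOf_leftOf (hnd : π.Nodup) (h0 : 0 ∈ π) {i : ℕ} (hi : 1 ≤ i)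
    {c : ℕ} (hc : c ∈ colSeqAt π (i + 1)) (hleft : leftOf π c ∈ colSeqAt π i) :
    rowOf π c = rowOf π (leftOf π c) := by
  obtain ⟨k, rfl⟩ := Nat.exists_eq_add_of_le' hi
  rw [rowOf, rowOf, colOf_eq_of_mem hnd h0 (Nat.le_add_left 1 _) hc,
    colOf_eq_of_mem hnd h0 hi hleft, Nat.add_sub_cancel, Nat.add_sub_cancel,
    Function.iterate_succ_apply]

theorem pairwise_rowOf_colSeqAt_one (hnd : π.Nodup) (h0 : 0 ∈ π) :
    Pairwise (· < ·) ((colSeqAt π 1).map (rowOf π)) := by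
  have hndC : (colSeqAt π 1).Nodup := (rtlMax_sublist _).nodup (prefixAt_nodup hnd 1)
  have hrow : ∀ c ∈ colSeqAt π 1, rowOf π c = (colSeqAt π 1).idxOf c + 1 := by
    intro c hc
    rw [rowOf, colOf_eq_of_mem hnd h0 le_rfl hc, Nat.sub_self, Function.iterate_zero_apply,
      colposOf, colOf_eq_of_mem hnd h0 le_rfl hc]
  rw [map_congr_left hrow, pairwise_map, pairwise_iff_get]
  intro a b hab
  rw [get_idxOf hndC, get_idxOf hndC]
  omega

theorem pairwise_rowOf_colSeqAt (hnd : π.Nodup) (h0 : 0 ∈ π) {i : ℕ}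
    (hi : 1 ≤ i) : Pairwise (· < ·) ((colSeqAt π i).map (rowOf π)) := by
  induction i, hi using Nat.le_induction with
  | base => exact pairwise_rowOf_colSeqAt_one hnd h0
  | succ i hi ih =>
    have hsub := map_leftOf_colSeqAt_succ_sublist hnd h0 hi
    have hrow : ∀ c ∈ colSeqAt π (i + 1), rowOf π c = rowOf π (leftOf π c) :=
      fun c hc => rowOf_eq_rowOf_leftOf hnd h0 hi hc (hsub.subset (mem_map_of_mem hc))
    have hsorted := ih.sublist (hsub.map (rowOf π))
    rw [map_map] at hsorted
    rwa [map_congr_left hrow]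

end Columns

end StackSorting

theorem stmt_10_general (n : ℕ) (π : List ℕ) (hπ : π.Perm (List.range (n + 1)))
    (i : ℕ) (hi : 1 ≤ i) :
    List.Pairwise (· < ·) ((colSeqAt π i).map (rowOf π)) :=
  StackSorting.pairwise_rowOf_colSeqAt (hπ.nodup_iff.2 List.nodup_range)
    (hπ.mem_iff.2 (List.mem_range.2 n.succ_pos)) hi

/-- Lemma 3.15: for `1 ≤ i ≤ met(π)`, the sequence `(row_π(c_{π,i,j}))_j` is strictly
increasing. -/
theorem stmt_10 (n : ℕ) (π : List ℕ) (hπ : π.Perm (List.range (n + 1)))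
    (h0 : π.getLast? = some 0) (i : ℕ) (hi : 1 ≤ i) (him : i ≤ met π) :
    List.Pairwise (· < ·) ((colSeqAt π i).map (rowOf π)) :=
  stmt_10_general n π hπ i hi
end
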